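/- arXiv:1208.5273 — 3 statements merged into one kernel-verified Lean document; each statement's English description precedes it below -/
import Mathlib

section
/- Transition potential bounds. Let f, g ∈ Ψ, let ω be an averaging kernel, and let L > 0. Set Δ_L f(x) = f((x+L)−) − f((x−L)+), Δ_L g(x) = g((x+L)−) − g((x−L)+), and e_L = ∫_L^∞ ω(x) dx. Then for all x ∈ ℝ: Ξ(ω; f, g; x, x) ≤ Δ_L f(x)·Δ_L g(x) + e_L, and |(f⊗ω)(x) − f(x)| ≤ Δ_L f(x) + e_L. -/
open MeasureTheory Filter Set

noncomputable section

/-- Convolution `(f ⊗ ω)(x) = ∫ y, f y · ω (x − y)`. -/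
def conv (f ω : ℝ → ℝ) (x : ℝ) : ℝ := ∫ y : ℝ, f y * ω (x - y)

/-- `ω` is an averaging kernel: even, nonnegative, of bounded variation, integrating to 1. -/
def IsAveragingKernel (ω : ℝ → ℝ) : Prop :=
  (∀ x, ω (-x) = ω x) ∧ (∀ x, 0 ≤ ω x) ∧ BoundedVariationOn ω Set.univ ∧
    MeasureTheory.Integrable ω ∧ (∫ x : ℝ, ω x) = 1

/-- The essential supremum `‖ω‖∞` of a kernel, as a real number. -/
def kerSup (ω : ℝ → ℝ) : ℝ := (eLpNorm ω ⊤ MeasureTheory.volume).toReal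

/-- `ω` is regular: for some `W ∈ (0,∞]`, it vanishes outside `[−W, W]` and is
positive on `(−W, W)` (the case `W = ∞` being that `ω` is everywhere positive). -/
def IsRegularKernel (ω : ℝ → ℝ) : Prop :=
  (∀ x, 0 < ω x) ∨
    ∃ W : ℝ, 0 < W ∧ (∀ x, W < |x| → ω x = 0) ∧ (∀ x, |x| < W → 0 < ω x)

/-- Membership in `𝒳`: nondecreasing self-maps of `[0,1]`. -/
def MemX (h : ℝ → ℝ) : Prop :=
  MonotoneOn h (Icc 0 1) ∧ MapsTo h (Icc 0 1) (Icc 0 1)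

/-- Left limit `h(u−)` of `h ∈ 𝒳` at `u ∈ [0,1]`, with the convention `h(0−) = 0`. -/
def lm (h : ℝ → ℝ) (u : ℝ) : ℝ := if u ≤ 0 then 0 else sSup (h '' Ico 0 u)

/-- Right limit `h(u+)` of `h ∈ 𝒳` at `u ∈ [0,1]`, with the convention `h(1+) = 1`. -/
def rm (h : ℝ → ℝ) (u : ℝ) : ℝ := if 1 ≤ u then 1 else sInf (h '' Ioc u 1)

/-- A canonical generalized inverse of `h ∈ 𝒳` (any valid inverse has the same integrals,
so the potential below is unambiguous). -/
def Xinv (h : ℝ → ℝ) (v : ℝ) : ℝ := sInf ({1} ∪ {u ∈ Icc (0:ℝ) 1 | v ≤ h u})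

/-- The potential `Φ(hf, hg; u, v) = ∫₀ᵘ hg⁻¹ + ∫₀ᵛ hf⁻¹ − u·v`. -/
def Pot (hf hg : ℝ → ℝ) (u v : ℝ) : ℝ :=
  (∫ x in (0:ℝ)..u, Xinv hg x) + (∫ x in (0:ℝ)..v, Xinv hf x) - u * v

/-- `A(hf, hg) = Φ(hf, hg; 1, 1)`. -/
def Agap (hf hg : ℝ → ℝ) : ℝ := Pot hf hg 1 1

/-- `(u,v)` is a crossing point of `(hf, hg)`:
`u ∈ [hg(v−), hg(v+)]` and `v ∈ [hf(u−), hf(u+)]`. -/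
def IsCrossing (hf hg : ℝ → ℝ) (u v : ℝ) : Prop :=
  u ∈ Icc (0:ℝ) 1 ∧ v ∈ Icc (0:ℝ) 1 ∧
    u ∈ Icc (lm hg v) (rm hg v) ∧ v ∈ Icc (lm hf u) (rm hf u)

/-- The strictly positive gap condition: there is a nontrivial crossing point, and every
nontrivial crossing point satisfies `Φ(hf, hg; u, v) > max {0, A(hf, hg)}`. -/
def StrictPosGap (hf hg : ℝ → ℝ) : Prop :=
  (∃ u v, IsCrossing hf hg u v ∧ ¬(u = 0 ∧ v = 0) ∧ ¬(u = 1 ∧ v = 1)) ∧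
    ∀ u v, IsCrossing hf hg u v → ¬(u = 0 ∧ v = 0) → ¬(u = 1 ∧ v = 1) →
      max 0 (Agap hf hg) < Pot hf hg u v

/-- Membership in `Ψ`: nondecreasing functions `ℝ → [0,1]`. -/
def MemPsi (f : ℝ → ℝ) : Prop := Monotone f ∧ ∀ x, f x ∈ Icc (0:ℝ) 1

/-- `f` is `(a,b)`-interpolating: limits `a` at `−∞` and `b` at `+∞`. -/
def Interpolates (f : ℝ → ℝ) (a b : ℝ) : Prop :=
  Filter.Tendsto f Filter.atBot (nhds a) ∧ Filter.Tendsto f Filter.atTop (nhds b)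

/-- Right limit `f(x+)` of a nondecreasing bounded function. -/
def rlim (f : ℝ → ℝ) (x : ℝ) : ℝ := sInf (f '' Ioi x)

/-- Left limit `f(x−)` of a nondecreasing bounded function. -/
def llim (f : ℝ → ℝ) (x : ℝ) : ℝ := sSup (f '' Iio x)

/-- `f(−∞)`, the limit at `−∞` of a nondecreasing bounded function. -/
def limBot (f : ℝ → ℝ) : ℝ := sInf (Set.range f)

/-- `f(+∞)`, the limit at `+∞` of a nondecreasing bounded function. -/
def limTop (f : ℝ → ℝ) : ℝ := sSup (Set.range f)

/-- The Lebesgue–Stieltjes measure associated with a (monotone) function. -/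
def stieltjesOf (f : ℝ → ℝ) : Measure ℝ :=
  haveI := Classical.dec (Monotone f)
  if h : Monotone f then h.stieltjesFunction.measure else 0

/-- Oriented Lebesgue–Stieltjes integral `∫_{(a,b]} φ df`, with the convention
`∫_{(a,b]} = −∫_{(b,a]}` when `b < a`. -/
def sInteg (f : ℝ → ℝ) (φ : ℝ → ℝ) (a b : ℝ) : ℝ :=
  if a ≤ b then ∫ y in Ioc a b, φ y ∂(stieltjesOf f)
  else - ∫ y in Ioc b a, φ y ∂(stieltjesOf f)

/-- `Ξ(ω; f, g; x₁, x₂)`. -/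
def Xi (ω f g : ℝ → ℝ) (x₁ x₂ : ℝ) : ℝ :=
  (∫ x in Ioi (0:ℝ), ω x * sInteg f (fun y => rlim g x₁ - g (y - x)) x₂ (x₁ + x)) +
    (∫ x in Ioi (0:ℝ), ω x * sInteg g (fun y => rlim f x₂ - f (y - x)) x₁ (x₂ + x))

/-!
At distance `t < L` from `x`, every increment of `f ∈ Ψ` entering the bounds is at most the
window oscillation `Δ_L f(x) = f((x+L)−) − f((x−L)+)` (`windowOsc f L x`), and at any distance
it is at most `1`. So each integrand is dominated by `ω t · (Δ + 𝟙[t ≥ L])`, with `Δ = Δ_L f(x)`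
resp. `Δ_L f(x) · Δ_L g(x)`, and the integral of this majorant is `Δ + e_L`.
For the convolution, evenness of `ω` lets both one-sided bounds be read on the tail `t ≥ L`.
For `Ξ(ω; f, g; x, x)`, the inner Stieltjes integral at lag `t` is at most
`(g(x+) − g((x−t)+)) · (f((x+t)+) − f(x+))`, and the two terms together are at most the product
of the increments of `f` and `g` over `(x − t, x + t]`.
-/

open Function

def windowOsc (f : ℝ → ℝ) (L x : ℝ) : ℝ := llim f (x + L) - rlim f (x - L)

section OneSidedLimits

variable {f : ℝ → ℝ} {L x : ℝ}

lemma rlim_eq_rightLim (hf : Monotone f) (x : ℝ) : rlim f x = rightLim f x :=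
  hf.rightLim_eq_sInf.symm

lemma llim_eq_leftLim (hf : Monotone f) (x : ℝ) : llim f x = leftLim f x :=
  hf.leftLim_eq_sSup.symm

lemma rlim_mono (hf : Monotone f) : Monotone (rlim f) := by
  simpa only [funext (rlim_eq_rightLim hf)] using hf.rightLim

lemma rlim_le_of_lt (hf : Monotone f) {a u : ℝ} (h : a < u) : rlim f a ≤ f u := by
  rw [rlim_eq_rightLim hf]; exact hf.rightLim_le h

lemma le_rlim_of_le (hf : Monotone f) {u a : ℝ} (h : u ≤ a) : f u ≤ rlim f a := by
  rw [rlim_eq_rightLim hf]; exact hf.le_rightLim h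

lemma rlim_sub_rlim_le_one (hf : MemPsi f) (u v : ℝ) : rlim f v - rlim f u ≤ 1 := by
  linarith [(rlim_le_of_lt hf.1 (lt_add_one v)).trans (hf.2 (v + 1)).2,
    (hf.2 u).1.trans (le_rlim_of_le hf.1 le_rfl)]

lemma sub_le_windowOsc (hf : Monotone f) {u v : ℝ} (hv : v < x + L) (hu : x - L < u) :
    f v - f u ≤ windowOsc f L x := by
  rw [windowOsc, llim_eq_leftLim hf]
  linarith [hf.le_leftLim hv, rlim_le_of_lt hf hu]

lemma rlim_sub_rlim_le_windowOsc (hf : Monotone f) {u v : ℝ} (hv : v < x + L)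
    (hu : x - L ≤ u) : rlim f v - rlim f u ≤ windowOsc f L x := by
  rw [windowOsc, llim_eq_leftLim hf, rlim_eq_rightLim hf v]
  linarith [hf.rightLim_le_leftLim hv, rlim_mono hf hu]

lemma windowOsc_nonneg (hf : Monotone f) (hL : 0 < L) (x : ℝ) : 0 ≤ windowOsc f L x := by
  linarith [rlim_sub_rlim_le_windowOsc hf (x := x) (u := x) (by linarith : x < x + L)
    (by linarith)]

end OneSidedLimits

section StieltjesIntegral

variable {f φ : ℝ → ℝ} {a b : ℝ}

lemma stieltjesOf_Ioc (hf : Monotone f) (a b : ℝ) :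
    stieltjesOf f (Ioc a b) = ENNReal.ofReal (rlim f b - rlim f a) := by
  rw [stieltjesOf, dif_pos hf, StieltjesFunction.measure_Ioc, hf.stieltjesFunction_eq,
    hf.stieltjesFunction_eq, rlim_eq_rightLim hf, rlim_eq_rightLim hf]

lemma sInteg_nonneg (hab : a ≤ b) (hφ : ∀ y ∈ Ioc a b, 0 ≤ φ y) : 0 ≤ sInteg f φ a b := by
  rw [sInteg, if_pos hab]
  exact setIntegral_nonneg measurableSet_Ioc hφ

lemma sInteg_le_mul (hf : Monotone f) (hab : a ≤ b) {C : ℝ} (hφ0 : ∀ y ∈ Ioc a b, 0 ≤ φ y)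
    (hφC : ∀ y ∈ Ioc a b, φ y ≤ C) : sInteg f φ a b ≤ C * (rlim f b - rlim f a) := by
  have hfin : stieltjesOf f (Ioc a b) < ⊤ := by
    rw [stieltjesOf_Ioc hf]; exact ENNReal.ofReal_lt_top
  rw [sInteg, if_pos hab]
  calc ∫ y in Ioc a b, φ y ∂stieltjesOf f
      ≤ ∫ _ in Ioc a b, C ∂stieltjesOf f :=
        integral_mono_of_nonneg (ae_restrict_of_forall_mem measurableSet_Ioc hφ0)
          (integrableOn_const hfin.ne) (ae_restrict_of_forall_mem measurableSet_Ioc hφC)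
    _ = C * (rlim f b - rlim f a) := by
        rw [setIntegral_const, smul_eq_mul, measureReal_def, stieltjesOf_Ioc hf,
          ENNReal.toReal_ofReal (sub_nonneg.2 (rlim_mono hf hab)), mul_comm]

end StieltjesIntegral

section TransitionIntegrand

variable {f g : ℝ → ℝ} {x t : ℝ}

lemma comp_sub_mem_Icc_rlim (hg : Monotone g) {y : ℝ} (hy : y ∈ Ioc x (x + t)) :
    g (y - t) ∈ Icc (rlim g (x - t)) (rlim g x) :=
  ⟨rlim_le_of_lt hg (by linarith [hy.1]), le_rlim_of_le hg (by linarith [hy.2])⟩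

lemma sInteg_shift_nonneg (hg : Monotone g) (ht : 0 ≤ t) :
    0 ≤ sInteg f (fun y => rlim g x - g (y - t)) x (x + t) :=
  sInteg_nonneg (by linarith) fun _ hy => sub_nonneg.2 (comp_sub_mem_Icc_rlim hg hy).2

lemma sInteg_shift_le (hf : Monotone f) (hg : Monotone g) (ht : 0 ≤ t) :
    sInteg f (fun y => rlim g x - g (y - t)) x (x + t) ≤
      (rlim g x - rlim g (x - t)) * (rlim f (x + t) - rlim f x) :=
  sInteg_le_mul hf (by linarith) (fun _ hy => sub_nonneg.2 (comp_sub_mem_Icc_rlim hg hy).2)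
    fun _ hy => sub_le_sub_left (comp_sub_mem_Icc_rlim hg hy).1 _

lemma sInteg_shift_add_le (hf : Monotone f) (hg : Monotone g) (ht : 0 ≤ t) :
    sInteg f (fun y => rlim g x - g (y - t)) x (x + t) +
        sInteg g (fun y => rlim f x - f (y - t)) x (x + t) ≤
      (rlim f (x + t) - rlim f (x - t)) * (rlim g (x + t) - rlim g (x - t)) := by
  have hfl := sub_nonneg.2 (rlim_mono hf (by linarith : x - t ≤ x))
  have hfr := sub_nonneg.2 (rlim_mono hf (by linarith : x ≤ x + t))
  have hgl := sub_nonneg.2 (rlim_mono hg (by linarith : x - t ≤ x))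
  have hgr := sub_nonneg.2 (rlim_mono hg (by linarith : x ≤ x + t))
  nlinarith [sInteg_shift_le hf hg (x := x) ht, sInteg_shift_le hg hf (x := x) ht,
    mul_nonneg hfl hgl, mul_nonneg hfr hgr]

end TransitionIntegrand

lemma integral_add_le_of_nonneg {α : Type*} [MeasurableSpace α] {μ : Measure α}
    {a b v : α → ℝ} (ha : ∀ᵐ t ∂μ, 0 ≤ a t) (hb : ∀ᵐ t ∂μ, 0 ≤ b t) (hv : Integrable v μ)
    (h : ∀ᵐ t ∂μ, a t + b t ≤ v t) : ∫ t, a t ∂μ + ∫ t, b t ∂μ ≤ ∫ t, v t ∂μ := by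
  by_cases hai : Integrable a μ
  · have hb_le : ∫ t, b t ∂μ ≤ ∫ t, (v t - a t) ∂μ :=
      integral_mono_of_nonneg hb (hv.sub hai) (h.mono fun t ht => by linarith)
    rw [integral_sub hv hai] at hb_le
    linarith
  · rw [integral_undef hai, zero_add]
    exact integral_mono_of_nonneg hb hv (by filter_upwards [ha, h] with t h₁ h₂; linarith)

def tailMajorant (ω : ℝ → ℝ) (D L t : ℝ) : ℝ := D * ω t + (Ici L).indicator ω t

section TailMajorant

variable {ω : ℝ → ℝ} {D L : ℝ}

lemma tailMajorant_nonneg (hω : ∀ t, 0 ≤ ω t) (hD : 0 ≤ D) (t : ℝ) :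
    0 ≤ tailMajorant ω D L t :=
  add_nonneg (mul_nonneg hD (hω t)) (indicator_nonneg (fun s _ => hω s) t)

lemma integrable_tailMajorant (hω : Integrable ω) : Integrable (tailMajorant ω D L) :=
  (hω.const_mul D).add (hω.indicator measurableSet_Ici)

lemma integral_tailMajorant (hω : Integrable ω) (hω1 : ∫ t, ω t = 1) :
    ∫ t, tailMajorant ω D L t = D + ∫ t in Ioi L, ω t := by
  simp only [tailMajorant]
  rw [integral_add (hω.const_mul D) (hω.indicator measurableSet_Ici),
    integral_const_mul, hω1, mul_one, integral_indicator measurableSet_Ici,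
    integral_Ici_eq_integral_Ioi]

lemma mul_le_tailMajorant {t φ : ℝ} (hωt : 0 ≤ ω t) (hD : 0 ≤ D) (hnear : t < L → φ ≤ D)
    (hφ : φ ≤ 1) : ω t * φ ≤ tailMajorant ω D L t := by
  rw [tailMajorant]
  rcases lt_or_ge t L with htL | htL
  · rw [indicator_of_notMem (notMem_Ici.2 htL), add_zero, mul_comm]
    exact mul_le_mul_of_nonneg_right (hnear htL) hωt
  · rw [indicator_of_mem (mem_Ici.2 htL)]
    nlinarith [mul_nonneg hD hωt]

end TailMajorant

section Averaging

variable {ω f : ℝ → ℝ}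

lemma conv_eq_integral_sub (x : ℝ) : conv f ω x = ∫ t, ω t * f (x - t) := by
  rw [conv, ← integral_sub_left_eq_self _ volume x]
  simp only [sub_sub_cancel, mul_comm]

lemma conv_eq_integral_add (hω : ∀ t, ω (-t) = ω t) (x : ℝ) :
    conv f ω x = ∫ t, ω t * f (x + t) := by
  rw [conv_eq_integral_sub, ← integral_neg_eq_self]
  simp only [hω, sub_neg_eq_add]

lemma integrable_mul_of_mem_Icc (hω : Integrable ω) {h : ℝ → ℝ} (hh : Measurable h)
    (hb : ∀ t, h t ∈ Icc (0 : ℝ) 1) : Integrable fun t => ω t * h t :=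
  hω.mul_bdd hh.aestronglyMeasurable (c := 1) <| ae_of_all _ fun t => by
    rw [Real.norm_eq_abs, abs_of_nonneg (hb t).1]; exact (hb t).2

lemma integral_mul_sub_const (hω : Integrable ω) (hω1 : ∫ t, ω t = 1) {h : ℝ → ℝ}
    (hh : Integrable fun t => ω t * h t) (c : ℝ) :
    ∫ t, ω t * (h t - c) = (∫ t, ω t * h t) - c := by
  simp only [mul_sub]
  rw [integral_sub hh (hω.mul_const c), integral_mul_const, hω1, one_mul]

lemma integral_mul_const_sub (hω : Integrable ω) (hω1 : ∫ t, ω t = 1) {h : ℝ → ℝ}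
    (hh : Integrable fun t => ω t * h t) (c : ℝ) :
    ∫ t, ω t * (c - h t) = c - ∫ t, ω t * h t := by
  simp only [mul_sub]
  rw [integral_sub (hω.mul_const c) hh, integral_mul_const, hω1, one_mul]

end Averaging

section Bounds

variable {ω f g : ℝ → ℝ} {L : ℝ}

lemma conv_sub_le (hω : IsAveragingKernel ω) (hf : MemPsi f) (hL : 0 < L) (x : ℝ) :
    conv f ω x - f x ≤ windowOsc f L x + ∫ y in Ioi L, ω y := by
  obtain ⟨hev, hω0, -, hωi, hω1⟩ := hω
  have hint := integrable_mul_of_mem_Icc hωi (h := fun t => f (x + t))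
    (hf.1.measurable.comp (measurable_const_add x)) fun t => hf.2 (x + t)
  rw [conv_eq_integral_add hev, ← integral_mul_sub_const hωi hω1 hint,
    ← integral_tailMajorant hωi hω1]
  refine integral_mono (by simp only [mul_sub]; exact hint.sub (hωi.mul_const (f x)))
    (integrable_tailMajorant hωi) fun t => mul_le_tailMajorant (hω0 t)
      (windowOsc_nonneg hf.1 hL x) (fun htL => sub_le_windowOsc hf.1 (by linarith) (by linarith)) ?_
  linarith [(hf.2 (x + t)).2, (hf.2 x).1]

lemma sub_conv_le (hω : IsAveragingKernel ω) (hf : MemPsi f) (hL : 0 < L) (x : ℝ) :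
    f x - conv f ω x ≤ windowOsc f L x + ∫ y in Ioi L, ω y := by
  obtain ⟨-, hω0, -, hωi, hω1⟩ := hω
  have hint := integrable_mul_of_mem_Icc hωi (h := fun t => f (x - t))
    (hf.1.measurable.comp (measurable_const_sub x)) fun t => hf.2 (x - t)
  rw [conv_eq_integral_sub, ← integral_mul_const_sub hωi hω1 hint,
    ← integral_tailMajorant hωi hω1]
  refine integral_mono (by simp only [mul_sub]; exact (hωi.mul_const (f x)).sub hint)
    (integrable_tailMajorant hωi) fun t => mul_le_tailMajorant (hω0 t)
      (windowOsc_nonneg hf.1 hL x) (fun htL => sub_le_windowOsc hf.1 (by linarith) (by linarith)) ?_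
  linarith [(hf.2 (x - t)).1, (hf.2 x).2]

lemma abs_conv_sub_le (hω : IsAveragingKernel ω) (hf : MemPsi f) (hL : 0 < L) (x : ℝ) :
    |conv f ω x - f x| ≤ windowOsc f L x + ∫ y in Ioi L, ω y :=
  abs_le.2 ⟨by linarith [sub_conv_le hω hf hL x], conv_sub_le hω hf hL x⟩

lemma xi_integrand_le_tailMajorant {t : ℝ} (hωt : 0 ≤ ω t) (hf : MemPsi f) (hg : MemPsi g)
    (hL : 0 < L) (x : ℝ) (ht : 0 < t) :
    ω t * sInteg f (fun y => rlim g x - g (y - t)) x (x + t) +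
        ω t * sInteg g (fun y => rlim f x - f (y - t)) x (x + t) ≤
      tailMajorant ω (windowOsc f L x * windowOsc g L x) L t := by
  have hsum := sInteg_shift_add_le hf.1 hg.1 (x := x) ht.le
  have hg0 := sub_nonneg.2 (rlim_mono hg.1 (by linarith : x - t ≤ x + t))
  rw [← mul_add]
  refine mul_le_tailMajorant hωt (mul_nonneg (windowOsc_nonneg hf.1 hL x)
    (windowOsc_nonneg hg.1 hL x)) (fun htL => hsum.trans ?_) (hsum.trans ?_)
  · exact mul_le_mul (rlim_sub_rlim_le_windowOsc hf.1 (by linarith) (by linarith))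
      (rlim_sub_rlim_le_windowOsc hg.1 (by linarith) (by linarith)) hg0
      (windowOsc_nonneg hf.1 hL x)
  · exact mul_le_one₀ (rlim_sub_rlim_le_one hf _ _) hg0 (rlim_sub_rlim_le_one hg _ _)

lemma xi_self_le (hω : IsAveragingKernel ω) (hf : MemPsi f) (hg : MemPsi g) (hL : 0 < L)
    (x : ℝ) : Xi ω f g x x ≤ windowOsc f L x * windowOsc g L x + ∫ y in Ioi L, ω y := by
  obtain ⟨-, hω0, -, hωi, hω1⟩ := hω
  have hD := mul_nonneg (windowOsc_nonneg hf.1 hL x) (windowOsc_nonneg hg.1 hL x)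
  calc Xi ω f g x x
      ≤ ∫ t in Ioi 0, tailMajorant ω (windowOsc f L x * windowOsc g L x) L t :=
        integral_add_le_of_nonneg
          (ae_restrict_of_forall_mem measurableSet_Ioi fun t (ht : 0 < t) =>
            mul_nonneg (hω0 t) (sInteg_shift_nonneg hg.1 ht.le))
          (ae_restrict_of_forall_mem measurableSet_Ioi fun t (ht : 0 < t) =>
            mul_nonneg (hω0 t) (sInteg_shift_nonneg hf.1 ht.le))
          (integrable_tailMajorant hωi).integrableOn
          (ae_restrict_of_forall_mem measurableSet_Ioi fun t (ht : 0 < t) =>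
            xi_integrand_le_tailMajorant (hω0 t) hf hg hL x ht)
    _ ≤ ∫ t, tailMajorant ω (windowOsc f L x * windowOsc g L x) L t :=
        setIntegral_le_integral (integrable_tailMajorant hωi)
          (ae_of_all _ (tailMajorant_nonneg hω0 hD))
    _ = windowOsc f L x * windowOsc g L x + ∫ y in Ioi L, ω y :=
        integral_tailMajorant hωi hω1

end Bounds

/-- **Transition potential bounds.** -/
theorem transition_potential_bounds
    (ω f g : ℝ → ℝ)
    (hω : IsAveragingKernel ω) (hfΨ : MemPsi f) (hgΨ : MemPsi g)
    (L : ℝ) (hL : 0 < L) (x : ℝ) :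
    Xi ω f g x x ≤
        (llim f (x + L) - rlim f (x - L)) * (llim g (x + L) - rlim g (x - L)) +
          ∫ y in Ioi L, ω y ∧
      |conv f ω x - f x| ≤
        (llim f (x + L) - rlim f (x - L)) + ∫ y in Ioi L, ω y :=
  ⟨xi_self_le hω hfΨ hgΨ hL x, abs_conv_sub_le hω hfΨ hL x⟩
end
end

section
/- Invariance of fixed point potential. Let (hf, hg) ∈ 𝒳², let ω be an averaging kernel, let α ∈ ℝ, and let (f, g) ∈ Ψ² be a consistent travelling-wave solution with shift α. Then: (A) (g(−∞), f(−∞)) is a crossing point of (hf, hg); (B) (g(+∞), f(+∞)) is a crossing point of (hf, hg); (C) if α = 0 then Φ(hf, hg; g(−∞), f(−∞)) = Φ(hf, hg; g(+∞), f(+∞)). -/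
open MeasureTheory Filter Set

noncomputable section

/-- `(f, g)` is a consistent travelling-wave solution with shift `α` for `(hf, hg)`
and kernel `ω`. -/
def ConsistentWave (hf hg f g ω : ℝ → ℝ) (α : ℝ) : Prop :=
  (∀ x, f x ∈ Icc (lm hf (conv g ω (x + α))) (rm hf (conv g ω (x + α)))) ∧
    (∀ x, g x ∈ Icc (lm hg (conv f ω x)) (rm hg (conv f ω x)))

/-!
(A) and (B): as `x → ∓∞` the convolutions `f ⊗ ω` and `g ⊗ ω` tend to the limits of `f` and `g`,
and the relation `v ∈ [h(u−), h(u+)]` is closed, so the consistency relations pass to the limit.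

(C): with `α = 0`, the relation for `f` says that `hf⁻¹ = (g ⊗ ω) ∘ f⁻¹` on
`(f(−∞), f(+∞))`, where `f⁻¹` is the quantile function of `f`. By the layer-cake formula,
`(g ⊗ ω)(c) = g(−∞) + ∫ Ω(c − g⁻¹(w)) dw` over `w ∈ (g(−∞), g(+∞))`, with `Ω` the distribution
function of `ω`. Hence `∫ hf⁻¹` over `(f(−∞), f(+∞))` is `g(−∞) Δf + ∬ Ω(f⁻¹(v) − g⁻¹(w))`, and
symmetrically for `hg`. Since `ω` is even, `Ω(t) + Ω(−t) = 1`, so the two double integrals add up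
to `Δf Δg`, which is exactly the change of `u v` between the two endpoints.
-/

open Topology

section Psi

variable {f : ℝ → ℝ}

theorem MemPsi.norm_le_one (hf : MemPsi f) (x : ℝ) : ‖f x‖ ≤ 1 := by
  rw [Real.norm_of_nonneg (hf.2 x).1]
  exact (hf.2 x).2

theorem MemPsi.bddAbove_range (hf : MemPsi f) : BddAbove (range f) :=
  ⟨1, by rintro _ ⟨x, rfl⟩; exact (hf.2 x).2⟩

theorem MemPsi.bddBelow_range (hf : MemPsi f) : BddBelow (range f) :=
  ⟨0, by rintro _ ⟨x, rfl⟩; exact (hf.2 x).1⟩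

theorem MemPsi.limBot_le (hf : MemPsi f) (x : ℝ) : limBot f ≤ f x :=
  csInf_le hf.bddBelow_range ⟨x, rfl⟩

theorem MemPsi.le_limTop (hf : MemPsi f) (x : ℝ) : f x ≤ limTop f :=
  le_csSup hf.bddAbove_range ⟨x, rfl⟩

theorem MemPsi.limBot_le_limTop (hf : MemPsi f) : limBot f ≤ limTop f :=
  (hf.limBot_le 0).trans (hf.le_limTop 0)

theorem MemPsi.limBot_mem_Icc (hf : MemPsi f) : limBot f ∈ Icc (0 : ℝ) 1 :=
  ⟨le_csInf (range_nonempty f) (by rintro _ ⟨x, rfl⟩; exact (hf.2 x).1),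
    (hf.limBot_le 0).trans (hf.2 0).2⟩

theorem MemPsi.limTop_mem_Icc (hf : MemPsi f) : limTop f ∈ Icc (0 : ℝ) 1 :=
  ⟨(hf.2 0).1.trans (hf.le_limTop 0),
    csSup_le (range_nonempty f) (by rintro _ ⟨x, rfl⟩; exact (hf.2 x).2)⟩

theorem MemPsi.tendsto_atBot (hf : MemPsi f) : Tendsto f atBot (𝓝 (limBot f)) :=
  tendsto_atBot_ciInf hf.1 hf.bddBelow_range

theorem MemPsi.tendsto_atTop (hf : MemPsi f) : Tendsto f atTop (𝓝 (limTop f)) :=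
  tendsto_atTop_ciSup hf.1 hf.bddAbove_range

end Psi

section Kernel

variable {ω : ℝ → ℝ}

theorem IsAveragingKernel.nonneg (hω : IsAveragingKernel ω) (x : ℝ) : 0 ≤ ω x := hω.2.1 x

theorem IsAveragingKernel.integrable (hω : IsAveragingKernel ω) : Integrable ω := hω.2.2.2.1

theorem IsAveragingKernel.integral_eq_one (hω : IsAveragingKernel ω) : ∫ x, ω x = 1 :=
  hω.2.2.2.2

theorem IsAveragingKernel.integral_comp_sub_left (hω : IsAveragingKernel ω) (c : ℝ) :
    ∫ y, ω (c - y) = 1 := by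
  rw [integral_sub_left_eq_self ω volume c, hω.integral_eq_one]

def kernelCDF (ω : ℝ → ℝ) (t : ℝ) : ℝ := ∫ z in Iio t, ω z

theorem monotone_kernelCDF (hω : IsAveragingKernel ω) : Monotone (kernelCDF ω) := fun _ _ hst =>
  setIntegral_mono_set hω.integrable.integrableOn (.of_forall hω.nonneg)
    (Iio_subset_Iio hst).eventuallyLE

theorem kernelCDF_nonneg (hω : IsAveragingKernel ω) (t : ℝ) : 0 ≤ kernelCDF ω t :=
  setIntegral_nonneg measurableSet_Iio fun z _ => hω.nonneg z

theorem kernelCDF_le_one (hω : IsAveragingKernel ω) (t : ℝ) : kernelCDF ω t ≤ 1 :=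
  hω.integral_eq_one ▸ setIntegral_le_integral hω.integrable (.of_forall hω.nonneg)

theorem kernelCDF_add_kernelCDF_neg (hω : IsAveragingKernel ω) (t : ℝ) :
    kernelCDF ω t + kernelCDF ω (-t) = 1 := by
  have hneg : kernelCDF ω (-t) = ∫ z in Ioi t, ω z := by
    rw [kernelCDF, ← integral_Iic_eq_integral_Iio, ← integral_comp_neg_Ioi]
    simp only [hω.1]
  rw [hneg, kernelCDF, ← integral_Iic_eq_integral_Iio, ← compl_Iic,
    integral_add_compl measurableSet_Iic hω.integrable, hω.integral_eq_one]

theorem integrable_kernelCDF_comp (hω : IsAveragingKernel ω) {α : Type*} [MeasurableSpace α]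
    {μ : Measure α} [IsFiniteMeasure μ] {F : α → ℝ} (hF : Measurable F) :
    Integrable (fun x => kernelCDF ω (F x)) μ := by
  refine (integrable_const (1 : ℝ)).mono'
    ((monotone_kernelCDF hω).measurable.comp hF).aestronglyMeasurable (.of_forall fun x => ?_)
  rw [Real.norm_of_nonneg (kernelCDF_nonneg hω _)]
  exact kernelCDF_le_one hω _

theorem integral_indicator_Ioi_comp_sub (ω : ℝ → ℝ) (c r : ℝ) :
    ∫ y, (Ioi r).indicator (fun y => ω (c - y)) y = kernelCDF ω (c - r) := by
  have hshift : ∀ y, (Ioi r).indicator (fun y => ω (c - y)) y = (Iio (c - r)).indicator ω (c - y) :=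
    fun y => by by_cases hy : r < y <;> simp [hy]
  rw [funext hshift, integral_sub_left_eq_self (fun z => (Iio (c - r)).indicator ω z) volume c,
    integral_indicator measurableSet_Iio, kernelCDF]

end Kernel

section Convolution

variable {f ω : ℝ → ℝ}

theorem conv_eq_integral_comp_sub (f ω : ℝ → ℝ) (x : ℝ) :
    conv f ω x = ∫ t, f (x - t) * ω t := by
  rw [conv, ← integral_sub_left_eq_self (fun t => f (x - t) * ω t) volume x]
  simp only [sub_sub_cancel]

theorem MemPsi.integrable_comp_sub_mul (hf : MemPsi f) (hω : IsAveragingKernel ω) (x : ℝ) :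
    Integrable (fun t => f (x - t) * ω t) :=
  hω.integrable.bdd_mul
    (hf.1.measurable.comp (measurable_const.sub measurable_id)).aestronglyMeasurable
    (.of_forall fun t => hf.norm_le_one (x - t))

theorem MemPsi.conv_mem_Icc (hf : MemPsi f) (hω : IsAveragingKernel ω) (x : ℝ) :
    conv f ω x ∈ Icc (0 : ℝ) 1 := by
  rw [conv_eq_integral_comp_sub]
  refine ⟨integral_nonneg fun t => mul_nonneg (hf.2 _).1 (hω.nonneg t), ?_⟩
  calc ∫ t, f (x - t) * ω t ≤ ∫ t, ω t :=
        integral_mono (hf.integrable_comp_sub_mul hω x) hω.integrable fun t =>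
          mul_le_of_le_one_left (hω.nonneg t) (hf.2 _).2
    _ = 1 := hω.integral_eq_one

theorem MemPsi.monotone_conv (hf : MemPsi f) (hω : IsAveragingKernel ω) : Monotone (conv f ω) := by
  intro x y hxy
  simp only [conv_eq_integral_comp_sub]
  exact integral_mono (hf.integrable_comp_sub_mul hω x) (hf.integrable_comp_sub_mul hω y) fun t =>
    mul_le_mul_of_nonneg_right (hf.1 (sub_le_sub_right hxy t)) (hω.nonneg t)

theorem MemPsi.tendsto_conv_of_ae_tendsto (hf : MemPsi f) (hω : IsAveragingKernel ω)
    {l : Filter ℝ} [l.IsCountablyGenerated] {F : ℝ → ℝ}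
    (hF : ∀ᵐ t, Tendsto (fun x => f (x - t)) l (𝓝 (F t))) :
    Tendsto (conv f ω) l (𝓝 (∫ t, F t * ω t)) := by
  simp only [funext (conv_eq_integral_comp_sub f ω)]
  refine tendsto_integral_filter_of_dominated_convergence (fun t => ‖ω t‖)
    (.of_forall fun x => (hf.integrable_comp_sub_mul hω x).aestronglyMeasurable)
    (.of_forall fun x => .of_forall fun t => ?_) hω.integrable.norm ?_
  · rw [norm_mul]
    exact mul_le_of_le_one_left (norm_nonneg _) (hf.norm_le_one _)
  · filter_upwards [hF] with t ht using ht.mul_const (ω t)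

theorem MemPsi.continuous_conv (hf : MemPsi f) (hω : IsAveragingKernel ω) :
    Continuous (conv f ω) := by
  refine continuous_iff_continuousAt.2 fun x₀ => ?_
  have hdisc : {t | ¬ContinuousAt f (x₀ - t)}.Countable :=
    hf.1.countable_not_continuousAt.preimage fun a b hab => sub_right_injective hab
  simpa only [ContinuousAt, ← conv_eq_integral_comp_sub] using
    hf.tendsto_conv_of_ae_tendsto hω (hdisc.ae_notMem volume |>.mono fun t ht =>
      (not_not.1 ht).tendsto.comp ((continuous_id.sub continuous_const).tendsto x₀))

theorem MemPsi.tendsto_conv_of_tendsto (hf : MemPsi f) (hω : IsAveragingKernel ω)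
    {l : Filter ℝ} [l.IsCountablyGenerated] {L : ℝ}
    (hl : ∀ t, Tendsto (fun x => x - t) l l) (hfL : Tendsto f l (𝓝 L)) :
    Tendsto (conv f ω) l (𝓝 L) := by
  simpa only [integral_const_mul, hω.integral_eq_one, mul_one] using
    hf.tendsto_conv_of_ae_tendsto hω (.of_forall fun t => hfL.comp (hl t))

theorem MemPsi.tendsto_conv_atBot (hf : MemPsi f) (hω : IsAveragingKernel ω) :
    Tendsto (conv f ω) atBot (𝓝 (limBot f)) :=
  hf.tendsto_conv_of_tendsto hω (fun t => tendsto_atBot_add_const_right _ (-t) tendsto_id)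
    hf.tendsto_atBot

theorem MemPsi.tendsto_conv_atTop (hf : MemPsi f) (hω : IsAveragingKernel ω) :
    Tendsto (conv f ω) atTop (𝓝 (limTop f)) :=
  hf.tendsto_conv_of_tendsto hω (fun t => tendsto_atTop_add_const_right _ (-t) tendsto_id)
    hf.tendsto_atTop

end Convolution

section Crossing

variable {h : ℝ → ℝ}

theorem MemX.le_lm (hh : MemX h) {u u' : ℝ} (hu' : 0 ≤ u') (hlt : u' < u) (hu : u ≤ 1) :
    h u' ≤ lm h u := by
  rw [lm, if_neg (hu'.trans_lt hlt).not_ge]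
  refine le_csSup ⟨1, ?_⟩ ⟨u', ⟨hu', hlt⟩, rfl⟩
  rintro _ ⟨z, hz, rfl⟩
  exact (hh.2 ⟨hz.1, hz.2.le.trans hu⟩).2

theorem MemX.rm_le (hh : MemX h) {u u' : ℝ} (hu : 0 ≤ u) (hlt : u < u') (hu' : u' ≤ 1) :
    rm h u ≤ h u' := by
  rw [rm, if_neg (hlt.trans_le hu').not_ge]
  refine csInf_le ⟨0, ?_⟩ ⟨u', ⟨hlt, hu'⟩, rfl⟩
  rintro _ ⟨z, hz, rfl⟩
  exact (hh.2 ⟨hu.trans hz.1.le, hz.2⟩).1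

theorem MemX.mem_Icc_lm_rm_of_tendsto (hh : MemX h) {l : Filter ℝ} [l.NeBot] {P p : ℝ → ℝ}
    {u v : ℝ} (hP : ∀ x, P x ∈ Icc (0 : ℝ) 1) (hrel : ∀ x, p x ∈ Icc (lm h (P x)) (rm h (P x)))
    (hPu : Tendsto P l (𝓝 u)) (hpv : Tendsto p l (𝓝 v)) (hv : v ∈ Icc (0 : ℝ) 1) :
    v ∈ Icc (lm h u) (rm h u) := by
  constructor
  · rcases le_or_gt u 0 with hu | hu
    · rw [lm, if_pos hu]; exact hv.1
    rw [lm, if_neg hu.not_ge]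
    refine csSup_le ⟨h 0, 0, ⟨le_rfl, hu⟩, rfl⟩ ?_
    rintro _ ⟨u', hu', rfl⟩
    refine ge_of_tendsto hpv ?_
    filter_upwards [hPu.eventually (eventually_gt_nhds hu'.2)] with x hx
    exact (hh.le_lm hu'.1 hx (hP x).2).trans (hrel x).1
  · rcases le_or_gt 1 u with hu | hu
    · rw [rm, if_pos hu]; exact hv.2
    rw [rm, if_neg hu.not_ge]
    refine le_csInf ⟨h 1, 1, ⟨hu, le_rfl⟩, rfl⟩ ?_
    rintro _ ⟨u', hu', rfl⟩
    refine le_of_tendsto hpv ?_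
    filter_upwards [hPu.eventually (eventually_lt_nhds hu'.1)] with x hx
    exact (hrel x).2.trans (hh.rm_le (hP x).1 hx hu'.2)

theorem ConsistentWave.isCrossing_of_tendsto {hf hg f g ω : ℝ → ℝ} {α : ℝ}
    (hwave : ConsistentWave hf hg f g ω α) (hhf : MemX hf) (hhg : MemX hg)
    (hω : IsAveragingKernel ω) (hfΨ : MemPsi f) (hgΨ : MemPsi g) {l : Filter ℝ} [l.NeBot]
    (hl : Tendsto (fun x => x + α) l l) {a b : ℝ} (hfa : Tendsto f l (𝓝 a))
    (hgb : Tendsto g l (𝓝 b)) (hfa' : Tendsto (conv f ω) l (𝓝 a))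
    (hgb' : Tendsto (conv g ω) l (𝓝 b)) (ha : a ∈ Icc (0 : ℝ) 1) (hb : b ∈ Icc (0 : ℝ) 1) :
    IsCrossing hf hg b a :=
  ⟨hb, ha, hhg.mem_Icc_lm_rm_of_tendsto (hfΨ.conv_mem_Icc hω) hwave.2 hfa' hgb hb,
    hhf.mem_Icc_lm_rm_of_tendsto (fun x => hgΨ.conv_mem_Icc hω (x + α)) hwave.1
      (hgb'.comp hl) hfa ha⟩

end Crossing

section Quantile

variable {p : ℝ → ℝ}

/-- The quantile function `p⁻¹` of `p ∈ Ψ`. Outside `(p(−∞), p(+∞))` the set is empty or unbounded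
above, so its `sSup` is junk; `0` is used there instead. -/
def quantile (p : ℝ → ℝ) (v : ℝ) : ℝ :=
  if v ∈ Ioo (limBot p) (limTop p) then sSup {x | p x < v} else 0

theorem quantile_of_mem {v : ℝ} (hv : v ∈ Ioo (limBot p) (limTop p)) :
    quantile p v = sSup {x | p x < v} :=
  if_pos hv

theorem nonempty_setOf_lt_of_limBot_lt {v : ℝ} (hv : limBot p < v) : {x | p x < v}.Nonempty := by
  obtain ⟨_, ⟨x, rfl⟩, hx⟩ := exists_lt_of_csInf_lt (range_nonempty p) hv
  exact ⟨x, hx⟩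

theorem Monotone.bddAbove_setOf_lt (hp : Monotone p) {v : ℝ} (hv : v < limTop p) :
    BddAbove {x | p x < v} := by
  obtain ⟨_, ⟨x₀, rfl⟩, hx₀⟩ := exists_lt_of_lt_csSup (range_nonempty p) hv
  exact ⟨x₀, fun x hx => le_of_not_gt fun hlt => (hx₀.trans_le (hp hlt.le)).not_gt hx⟩

theorem Monotone.measurable_quantile (hp : Monotone p) : Measurable (quantile p) := by
  refine measurable_of_restrict_of_restrict_compl (s := Ioo (limBot p) (limTop p))
    measurableSet_Ioo ?_ ?_
  · refine Monotone.measurable fun v w hvw => ?_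
    simp only [domRestrict_apply, quantile_of_mem v.2, quantile_of_mem w.2]
    exact csSup_le_csSup (hp.bddAbove_setOf_lt w.2.2) (nonempty_setOf_lt_of_limBot_lt v.2.1)
      fun x hx => lt_of_lt_of_le hx (Subtype.coe_le_coe.2 hvw)
  · have hzero : (Ioo (limBot p) (limTop p))ᶜ.domRestrict (quantile p) = fun _ => 0 :=
      funext fun v => if_neg v.2
    rw [hzero]
    exact measurable_const

theorem Monotone.countable_setOf_not_subsingleton_preimage (hp : Monotone p) :
    {w | ¬(p ⁻¹' {w}).Subsingleton}.Countable := by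
  refine ((countable_range ((↑) : ℚ → ℝ)).image p).mono fun w hw => ?_
  obtain ⟨y₁, hy₁, y₂, hy₂, hne⟩ := not_subsingleton_iff.1 hw
  wlog h12 : y₁ < y₂ generalizing y₁ y₂
  · exact this y₂ hy₂ y₁ hy₁ hne.symm (hne.lt_or_gt.resolve_left h12)
  obtain ⟨q, hq₁, hq₂⟩ := exists_rat_btwn h12
  exact ⟨q, ⟨q, rfl⟩, le_antisymm (hy₂ ▸ hp hq₂.le) (hy₁ ▸ hp hq₁.le)⟩

theorem Monotone.ae_lt_iff_quantile_lt (hp : Monotone p) {w : ℝ}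
    (hw : w ∈ Ioo (limBot p) (limTop p)) (hfiber : (p ⁻¹' {w}).Subsingleton) :
    ∀ᵐ y, w < p y ↔ quantile p w < y := by
  have hbdd := hp.bddAbove_setOf_lt hw.2
  filter_upwards [(hfiber.countable.union (countable_singleton (quantile p w))).ae_notMem volume]
    with y hy
  simp only [mem_union, mem_preimage, mem_singleton_iff, not_or] at hy
  rw [quantile_of_mem hw] at hy ⊢
  constructor
  · intro hwy
    refine lt_of_le_of_ne (csSup_le (nonempty_setOf_lt_of_limBot_lt hw.1) fun x hx => ?_)
      (Ne.symm hy.2)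
    exact le_of_not_gt fun hyx => (hx.trans hwy).not_ge (hp hyx.le)
  · intro hlt
    exact lt_of_le_of_ne (le_of_not_gt fun hpy => (le_csSup hbdd hpy).not_gt hlt)
      (Ne.symm hy.1)

end Quantile

section GeneralizedInverse

variable {h : ℝ → ℝ}

theorem bddBelow_Xinv_set (h : ℝ → ℝ) (v : ℝ) :
    BddBelow ({1} ∪ {u ∈ Icc (0 : ℝ) 1 | v ≤ h u}) :=
  ⟨0, by rintro b (rfl | hb) <;> [norm_num; exact hb.1.1]⟩

theorem Xinv_le_one (h : ℝ → ℝ) (v : ℝ) : Xinv h v ≤ 1 :=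
  csInf_le (bddBelow_Xinv_set h v) (Or.inl rfl)

theorem monotone_Xinv (h : ℝ → ℝ) : Monotone (Xinv h) := fun _ _ hvw =>
  csInf_le_csInf (bddBelow_Xinv_set h _) ⟨1, Or.inl rfl⟩ fun _ hb =>
    hb.imp id fun hb => ⟨hb.1, hvw.trans hb.2⟩

theorem MemX.Xinv_le_of_le_rm (hh : MemX h) {u v : ℝ} (hu : u ∈ Icc (0 : ℝ) 1)
    (hv : v ≤ rm h u) : Xinv h v ≤ u := by
  refine le_of_forall_gt_imp_ge_of_dense fun u' hu' => ?_
  rcases le_or_gt u' 1 with hu'1 | hu'1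
  · exact csInf_le (bddBelow_Xinv_set h v)
      (Or.inr ⟨⟨hu.1.trans hu'.le, hu'1⟩, hv.trans (hh.rm_le hu.1 hu' hu'1)⟩)
  · exact (Xinv_le_one h v).trans hu'1.le

theorem MemX.le_Xinv_of_lm_lt (hh : MemX h) {u v : ℝ} (hu : u ∈ Icc (0 : ℝ) 1)
    (hv : lm h u < v) : u ≤ Xinv h v := by
  refine le_csInf ⟨1, Or.inl rfl⟩ ?_
  rintro b (rfl | hb)
  · exact hu.2
  · exact le_of_not_gt fun hbu => (hh.le_lm hb.1.1 hbu hu.2).trans_lt hv |>.not_ge hb.2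

theorem MemX.Xinv_eq_comp_quantile (hh : MemX h) {p P : ℝ → ℝ} (hp : Monotone p)
    (hPmono : Monotone P) (hPcont : Continuous P) (hP : ∀ x, P x ∈ Icc (0 : ℝ) 1)
    (hrel : ∀ x, p x ∈ Icc (lm h (P x)) (rm h (P x))) {v : ℝ}
    (hv : v ∈ Ioo (limBot p) (limTop p)) :
    Xinv h v = P (quantile p v) := by
  have hbdd := hp.bddAbove_setOf_lt hv.2
  rw [quantile_of_mem hv]
  set a := sSup {x | p x < v}
  have hright : ∀ y, a < y → Xinv h v ≤ P y := fun y hy =>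
    hh.Xinv_le_of_le_rm (hP y) ((le_of_not_gt fun hpy => (le_csSup hbdd hpy).not_gt hy).trans
      (hrel y).2)
  have hleft : ∀ y, y < a → P y ≤ Xinv h v := fun y hy => by
    obtain ⟨y', hy'v, hyy'⟩ := exists_lt_of_lt_csSup (nonempty_setOf_lt_of_limBot_lt hv.1) hy
    exact (hPmono hyy'.le).trans (hh.le_Xinv_of_lm_lt (hP y') ((hrel y').1.trans_lt hy'v))
  refine le_antisymm ?_ ?_
  · refine ge_of_tendsto (hPcont.continuousWithinAt (s := Ioi a)) ?_
    filter_upwards [self_mem_nhdsWithin] with y hy using hright y hy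
  · refine le_of_tendsto (hPcont.continuousWithinAt (s := Iio a)) ?_
    filter_upwards [self_mem_nhdsWithin] with y hy using hleft y hy

end GeneralizedInverse

section LayerCake

variable {p ω : ℝ → ℝ}

theorem MemPsi.conv_eq_limBot_add_integral_kernelCDF (hp : MemPsi p) (hω : IsAveragingKernel ω)
    (c : ℝ) :
    conv p ω c = limBot p + ∫ w in Ioo (limBot p) (limTop p), kernelCDF ω (c - quantile p w) := by
  set s := Ioo (limBot p) (limTop p)
  set u : ℝ × ℝ → ℝ := {q | q.1 < p q.2}.indicator fun q => ω (c - q.2)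
  have hu : Integrable u ((volume.restrict s).prod volume) :=
    ((hω.integrable.comp_sub_left c).comp_snd _).indicator
      (measurableSet_lt measurable_fst (hp.1.measurable.comp measurable_snd))
  have hsection : ∀ᵐ w ∂volume.restrict s, kernelCDF ω (c - quantile p w) = ∫ y, u (w, y) := by
    filter_upwards [ae_restrict_mem measurableSet_Ioo,
      ae_restrict_of_ae (hp.1.countable_setOf_not_subsingleton_preimage.ae_notMem volume)]
      with w hws hflat
    rw [← integral_indicator_Ioi_comp_sub]
    refine integral_congr_ae ?_
    filter_upwards [hp.1.ae_lt_iff_quantile_lt hws (not_not.1 hflat)] with y hy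
    simp only [u, indicator_apply, mem_ofPred_eq, mem_Ioi, hy]
  have hfiber : ∀ y, ∫ w in s, u (w, y) = (p y - limBot p) * ω (c - y) := fun y => by
    have hsec : (fun w => u (w, y)) = (Iio (p y)).indicator fun _ => ω (c - y) := by
      ext w; simp only [u, indicator_apply, mem_ofPred_eq, mem_Iio]
    rw [hsec, setIntegral_indicator measurableSet_Iio, setIntegral_const, smul_eq_mul,
      Ioo_inter_Iio, min_eq_right (hp.le_limTop y), Real.volume_real_Ioo_of_le (hp.limBot_le y)]
  have hshift := hω.integrable.comp_sub_left c
  calc conv p ω c = limBot p + ∫ y, (p y - limBot p) * ω (c - y) := by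
        simp only [sub_mul]
        rw [integral_sub (hshift.bdd_mul hp.1.measurable.aestronglyMeasurable
            (.of_forall hp.norm_le_one)) (hshift.const_mul _),
          integral_const_mul, hω.integral_comp_sub_left, conv]
        ring
    _ = limBot p + ∫ w in s, ∫ y, u (w, y) := by
        simp only [← hfiber]
        rw [integral_integral_swap (f := fun w y => u (w, y)) hu]
    _ = limBot p + ∫ w in s, kernelCDF ω (c - quantile p w) := by
        rw [integral_congr_ae hsection]

end LayerCake

section Potential

variable {h ω : ℝ → ℝ}

theorem integral_kernelCDF_sub_add_integral_kernelCDF_sub (hω : IsAveragingKernel ω)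
    {F G : ℝ → ℝ} (hF : Measurable F) (hG : Measurable G) {a b c d : ℝ} (hab : a ≤ b)
    (hcd : c ≤ d) :
    (∫ x in Ioo a b, ∫ y in Ioo c d, kernelCDF ω (F x - G y)) +
      (∫ y in Ioo c d, ∫ x in Ioo a b, kernelCDF ω (G y - F x)) = (b - a) * (d - c) := by
  have hint₁ : Integrable (fun q : ℝ × ℝ => kernelCDF ω (F q.1 - G q.2))
      ((volume.restrict (Ioo a b)).prod (volume.restrict (Ioo c d))) :=
    integrable_kernelCDF_comp hω ((hF.comp measurable_fst).sub (hG.comp measurable_snd))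
  have hint₂ : Integrable (fun q : ℝ × ℝ => kernelCDF ω (G q.2 - F q.1))
      ((volume.restrict (Ioo a b)).prod (volume.restrict (Ioo c d))) :=
    integrable_kernelCDF_comp hω ((hG.comp measurable_snd).sub (hF.comp measurable_fst))
  rw [← integral_integral_swap (f := fun x y => kernelCDF ω (G y - F x)) hint₂,
    ← integral_prod _ hint₁, ← integral_prod _ hint₂, ← integral_add hint₁ hint₂]
  simp only [← neg_sub (F _), kernelCDF_add_kernelCDF_neg hω, integral_const, smul_eq_mul,
    mul_one]
  rw [← univ_prod_univ, measureReal_prod_prod, measureReal_restrict_apply_univ,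
    measureReal_restrict_apply_univ, Real.volume_real_Ioo_of_le hab, Real.volume_real_Ioo_of_le hcd]

theorem MemX.integral_Xinv_eq (hh : MemX h) {p q : ℝ → ℝ} (hp : MemPsi p) (hq : MemPsi q)
    (hω : IsAveragingKernel ω) (hrel : ∀ x, p x ∈ Icc (lm h (conv q ω x)) (rm h (conv q ω x))) :
    ∫ v in Ioo (limBot p) (limTop p), Xinv h v =
      limBot q * (limTop p - limBot p) + ∫ v in Ioo (limBot p) (limTop p),
        ∫ w in Ioo (limBot q) (limTop q), kernelCDF ω (quantile p v - quantile q w) := by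
  have hinner : Integrable (fun v => ∫ w in Ioo (limBot q) (limTop q),
      kernelCDF ω (quantile p v - quantile q w)) (volume.restrict (Ioo (limBot p) (limTop p))) :=
    (integrable_kernelCDF_comp hω (μ := (volume.restrict _).prod (volume.restrict _))
      ((hp.1.measurable_quantile.comp measurable_fst).sub
        (hq.1.measurable_quantile.comp measurable_snd))).integral_prod_left
  rw [setIntegral_congr_fun measurableSet_Ioo fun v hv => by
      rw [hh.Xinv_eq_comp_quantile hp.1 (hq.monotone_conv hω) (hq.continuous_conv hω)
        (hq.conv_mem_Icc hω) hrel hv, hq.conv_eq_limBot_add_integral_kernelCDF hω],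
    integral_add (integrable_const _) hinner, setIntegral_const, smul_eq_mul,
    Real.volume_real_Ioo_of_le hp.limBot_le_limTop, mul_comm]

theorem intervalIntegral_Xinv_sub (h : ℝ → ℝ) {a b : ℝ} (hab : a ≤ b) :
    (∫ x in (0 : ℝ)..b, Xinv h x) - ∫ x in (0 : ℝ)..a, Xinv h x = ∫ x in Ioo a b, Xinv h x := by
  rw [intervalIntegral.integral_interval_sub_left ((monotone_Xinv h).intervalIntegrable)
    ((monotone_Xinv h).intervalIntegrable), intervalIntegral.integral_of_le hab,
    integral_Ioc_eq_integral_Ioo]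

theorem Pot_sub_Pot (hf hg : ℝ → ℝ) {u u' v v' : ℝ} (hu : u ≤ u') (hv : v ≤ v') :
    Pot hf hg u' v' - Pot hf hg u v =
      (∫ x in Ioo u u', Xinv hg x) + (∫ x in Ioo v v', Xinv hf x) - (u' * v' - u * v) := by
  rw [← intervalIntegral_Xinv_sub hg hu, ← intervalIntegral_Xinv_sub hf hv, Pot, Pot]
  ring

end Potential

/-- **Invariance of fixed point potential.** -/
theorem invariance_fixed_point_potential
    (ω hf hg f g : ℝ → ℝ) (α : ℝ)
    (hω : IsAveragingKernel ω) (hhf : MemX hf) (hhg : MemX hg)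
    (hfΨ : MemPsi f) (hgΨ : MemPsi g)
    (hwave : ConsistentWave hf hg f g ω α) :
    IsCrossing hf hg (limBot g) (limBot f) ∧
    IsCrossing hf hg (limTop g) (limTop f) ∧
    (α = 0 →
      Pot hf hg (limBot g) (limBot f) = Pot hf hg (limTop g) (limTop f)) := by
  refine ⟨hwave.isCrossing_of_tendsto hhf hhg hω hfΨ hgΨ
      (tendsto_atBot_add_const_right _ α tendsto_id) hfΨ.tendsto_atBot hgΨ.tendsto_atBot
      (hfΨ.tendsto_conv_atBot hω) (hgΨ.tendsto_conv_atBot hω) hfΨ.limBot_mem_Icc hgΨ.limBot_mem_Icc,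
    hwave.isCrossing_of_tendsto hhf hhg hω hfΨ hgΨ
      (tendsto_atTop_add_const_right _ α tendsto_id) hfΨ.tendsto_atTop hgΨ.tendsto_atTop
      (hfΨ.tendsto_conv_atTop hω) (hgΨ.tendsto_conv_atTop hω) hfΨ.limTop_mem_Icc hgΨ.limTop_mem_Icc,
    ?_⟩
  rintro rfl
  have hf_rel : ∀ x, f x ∈ Icc (lm hf (conv g ω x)) (rm hf (conv g ω x)) := by
    simpa only [add_zero] using hwave.1
  rw [eq_comm, ← sub_eq_zero, Pot_sub_Pot hf hg hgΨ.limBot_le_limTop hfΨ.limBot_le_limTop,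
    hhg.integral_Xinv_eq hgΨ hfΨ hω hwave.2, hhf.integral_Xinv_eq hfΨ hgΨ hω hf_rel]
  linear_combination integral_kernelCDF_sub_add_integral_kernelCDF_sub hω
    hgΨ.1.measurable_quantile hfΨ.1.measurable_quantile hgΨ.limBot_le_limTop hfΨ.limBot_le_limTop
end
end

section
/- The crossing set is componentwise ordered. For any (hf, hg) ∈ 𝒳² and any two crossing points (u₁, v₁), (u₂, v₂) of (hf, hg), one has (u₂ − u₁)(v₂ − v₁) ≥ 0. -/
open MeasureTheory Filter Set

noncomputable section

lemma rm_le_lm (h : ℝ → ℝ) (hh : MemX h) {a b : ℝ} (ha : 0 ≤ a) (hb : b ≤ 1)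
    (hab : a < b) : rm h a ≤ lm h b := by
  have ha1 : ¬ (1 ≤ a) := by linarith
  have hb0 : ¬ (b ≤ 0) := by linarith
  rw [rm, if_neg ha1, lm, if_neg hb0]
  set c := (a + b) / 2 with hc
  have hc1 : a < c := by rw [hc]; linarith
  have hc2 : c < b := by rw [hc]; linarith
  have hc01 : c ∈ Icc (0:ℝ) 1 := ⟨by linarith, by linarith⟩
  have hmem1 : h c ∈ h '' Ioc a 1 := ⟨c, ⟨hc1, by linarith⟩, rfl⟩
  have hmem2 : h c ∈ h '' Ico 0 b := ⟨c, ⟨by linarith, hc2⟩, rfl⟩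
  have hbdd1 : BddBelow (h '' Ioc a 1) := by
    refine ⟨0, fun y hy => ?_⟩
    obtain ⟨x, hx, rfl⟩ := hy
    exact (hh.2 ⟨by linarith [hx.1], hx.2⟩).1
  have hbdd2 : BddAbove (h '' Ico 0 b) := by
    refine ⟨1, fun y hy => ?_⟩
    obtain ⟨x, hx, rfl⟩ := hy
    exact (hh.2 ⟨hx.1, by linarith [hx.2]⟩).2
  exact le_trans (csInf_le hbdd1 hmem1) (le_csSup hbdd2 hmem2)

/-- **The crossing set is componentwise ordered.** -/
theorem crossing_set_componentwise_ordered
    (hf hg : ℝ → ℝ) (hhf : MemX hf) (hhg : MemX hg)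
    (u₁ v₁ u₂ v₂ : ℝ)
    (h1 : IsCrossing hf hg u₁ v₁) (h2 : IsCrossing hf hg u₂ v₂) :
    0 ≤ (u₂ - u₁) * (v₂ - v₁) := by
  obtain ⟨hu1, hv1, hcg1, hcf1⟩ := h1
  obtain ⟨hu2, hv2, hcg2, hcf2⟩ := h2
  rcases lt_trichotomy u₁ u₂ with hlt | heq | hgt
  · have hv : v₁ ≤ v₂ :=
      le_trans hcf1.2 (le_trans (rm_le_lm hf hhf hu1.1 hu2.2 hlt) hcf2.1)
    exact mul_nonneg (by linarith) (by linarith)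
  · rw [heq]; simp
  · have hv : v₂ ≤ v₁ :=
      le_trans hcf2.2 (le_trans (rm_le_lm hf hhf hu2.1 hu1.2 hgt) hcf1.1)
    exact mul_nonneg_of_nonpos_of_nonpos (by linarith) (by linarith)
end
end
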